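/- Let X_1,...,X_n be negatively associated Bernoulli random variables with X = Σ_i X_i and μ = Σ_i P(X_i = 1). Then for every z > 1, E[z^X] ≤ exp(μ(z−1)). -/

import Mathlib

open MeasureTheory Finset

/-!
For Bernoulli variables `z ^ X = ∏ i, (1 + (z - 1) Xᵢ) = ∑ₜ (z - 1) ^ |t| ∏_{i ∈ t} Xᵢ`, and
`∏_{i ∈ t} Xᵢ` is the indicator of the event that all `Xᵢ`, `i ∈ t`, equal `1`. Taking expectations
and bounding each of these probabilities by negative association (the coefficients are
nonnegative as `z > 1`) gives `E[z ^ X] ≤ ∑ₜ (z - 1) ^ |t| ∏_{i ∈ t} pᵢ = ∏ i, (1 + (z - 1) pᵢ)`,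
which is at most `exp (∑ i, (z - 1) pᵢ)` since `1 + x ≤ exp x`.
-/

lemma pow_eq_one_add_sub_one_mul_of_le_one {R : Type*} [CommRing R] (z : R) {b : ℕ}
    (hb : b ≤ 1) : z ^ b = 1 + (z - 1) * b := by
  interval_cases b <;> simp

lemma ENNReal.toReal_le_prod_of_le {ι : Type*} {t : Finset ι} {a : ENNReal} {b : ι → ENNReal}
    (hb : ∀ i ∈ t, b i ≠ ⊤) (h : a ≤ ∏ i ∈ t, b i) : a.toReal ≤ ∏ i ∈ t, (b i).toReal := by
  rw [← ENNReal.toReal_prod]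
  exact ENNReal.toReal_mono (ENNReal.prod_ne_top hb) h

section Bernoulli

variable {Ω ι : Type*} {X : ι → Ω → ℕ}

lemma prod_natCast_eq_indicator (hX : ∀ i ω, X i ω ≤ 1) (t : Finset ι) (ω : Ω) :
    ∏ i ∈ t, (X i ω : ℝ) = {ω | ∀ i ∈ t, X i ω = 1}.indicator 1 ω := by
  rw [Set.indicator_apply]
  split_ifs with hω
  · exact prod_eq_one fun i hi ↦ by simp [show X i ω = 1 from hω i hi]
  · simp only [Set.mem_ofPred_eq, not_forall] at hω
    obtain ⟨i, hi, hne⟩ := hω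
    exact prod_eq_zero hi (by simp [show X i ω = 0 by have := hX i ω; omega])

variable [MeasurableSpace Ω]

lemma measurableSet_forall_eq_one (hX : ∀ i, Measurable (X i)) (t : Finset ι) :
    MeasurableSet {ω | ∀ i ∈ t, X i ω = 1} := by
  simp only [Set.ofPred_forall]
  exact t.measurableSet_biInter fun i _ ↦ hX i (measurableSet_singleton 1)

lemma integral_pow_sum_eq_sum_powerset (μ : Measure Ω) [IsFiniteMeasure μ]
    (hmeas : ∀ i, Measurable (X i)) (hX : ∀ i ω, X i ω ≤ 1) (s : Finset ι) (z : ℝ) :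
    ∫ ω, z ^ (∑ i ∈ s, X i ω) ∂μ =
      ∑ t ∈ s.powerset, (z - 1) ^ #t * μ.real {ω | ∀ i ∈ t, X i ω = 1} := by
  have hexpand : ∀ ω, z ^ (∑ i ∈ s, X i ω) =
      ∑ t ∈ s.powerset, (z - 1) ^ #t * {ω | ∀ i ∈ t, X i ω = 1}.indicator 1 ω := by
    intro ω
    rw [← prod_pow_eq_pow_sum,
      prod_congr rfl fun i _ ↦ pow_eq_one_add_sub_one_mul_of_le_one z (hX i ω), prod_one_add]
    refine sum_congr rfl fun t _ ↦ ?_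
    rw [prod_mul_distrib, prod_const, prod_natCast_eq_indicator hX]
  simp_rw [hexpand]
  rw [integral_finsetSum _ fun t _ ↦
    ((integrable_const 1).indicator (measurableSet_forall_eq_one hmeas t)).const_mul _]
  simp_rw [integral_const_mul, integral_indicator_one (measurableSet_forall_eq_one hmeas _)]

end Bernoulli

/-- For negatively associated Bernoulli random variables with `X = ∑ Xᵢ` and
`μ₀ = ∑ P(Xᵢ = 1)`, one has `E[z^X] ≤ exp(μ₀ (z - 1))` for every `z > 1`. -/
theorem neg_assoc_bernoulli_mgf
    {Ω : Type*} [MeasurableSpace Ω] (μ : Measure Ω) [IsProbabilityMeasure μ]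
    (n : ℕ) (X : Fin n → Ω → ℕ)
    (hmeas : ∀ i, Measurable (X i))
    (hBer : ∀ i ω, X i ω ≤ 1)
    (hNA : ∀ s : Finset (Fin n),
      μ {ω | ∀ i ∈ s, X i ω = 1} ≤ ∏ i ∈ s, μ {ω | X i ω = 1})
    (z : ℝ) (hz : 1 < z) :
    ∫ ω, z ^ (∑ i, X i ω) ∂μ ≤
      Real.exp ((∑ i, (μ {ω | X i ω = 1}).toReal) * (z - 1)) := by
  set p : Fin n → ℝ := fun i ↦ (μ {ω | X i ω = 1}).toReal
  calc ∫ ω, z ^ (∑ i, X i ω) ∂μ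
      = ∑ t ∈ univ.powerset, (z - 1) ^ #t * μ.real {ω | ∀ i ∈ t, X i ω = 1} :=
        integral_pow_sum_eq_sum_powerset μ hmeas hBer univ z
    _ ≤ ∑ t ∈ univ.powerset, (z - 1) ^ #t * ∏ i ∈ t, p i := by
        gcongr with t
        exact ENNReal.toReal_le_prod_of_le (fun i _ ↦ measure_ne_top μ _) (hNA t)
    _ = ∏ i, (1 + (z - 1) * p i) := by
        rw [prod_one_add]
        simp_rw [prod_mul_distrib, prod_const]
    _ ≤ Real.exp (∑ i, (z - 1) * p i) :=
        Real.prod_one_add_le_exp_sum _ fun i ↦ mul_nonneg (by linarith) ENNReal.toReal_nonneg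
    _ = Real.exp ((∑ i, p i) * (z - 1)) := by rw [← mul_sum, mul_comm]
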